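/- arXiv:1710.10252 — 3 statements merged into one kernel-verified Lean document; each statement's English description precedes it below -/
import Mathlib

section
/- Let X_{AB} be positive definite on H_A ⊗ H_B with marginal X_A = Tr_B X_{AB}. The operator V : H_A ⊗ H_Â → H_A ⊗ H_B ⊗ H_Â ⊗ H_B̂ defined by V = (X_{AB}^{1/2}(X_A^{-1/2} ⊗ I_Â)) |Γ⟩_{BB̂} (i.e., v ↦ X_{AB}^{1/2}(X_A^{-1/2} ⊗ I_Â)(v ⊗ |Γ⟩_{BB̂}) with appropriate reordering of tensor factors) is an isometry: V†V = I. -/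
open Matrix Kronecker BigOperators
open scoped Classical ComplexOrder

/-- Apply a real function to a Hermitian matrix via the functional calculus
(eigenvalue decomposition); junk value `0` on non-Hermitian input. -/
noncomputable def matFun {n : Type} [Fintype n] [DecidableEq n]
    (f : ℝ → ℝ) (A : Matrix n n ℂ) : Matrix n n ℂ :=
  if hA : A.IsHermitian then
    (hA.eigenvectorUnitary : Matrix n n ℂ) *
      Matrix.diagonal (fun i => (f (hA.eigenvalues i) : ℂ)) *
      (star (hA.eigenvectorUnitary : Matrix n n ℂ))
  else 0

/-- The unnormalized maximally entangled vector `∑ i, |i⟩⊗|i⟩`. -/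
def gammaVec (n : Type) [DecidableEq n] : n × n → ℂ :=
  fun p => if p.1 = p.2 then 1 else 0

/-- Partial trace over the second tensor factor. -/
noncomputable def ptraceB {a b : Type} [Fintype b]
    (X : Matrix (a × b) (a × b) ℂ) : Matrix a a ℂ :=
  fun i j => ∑ k, X (i, k) (j, k)

/-- Matrix power `A ^ p` (real exponent) via the functional calculus. -/
noncomputable def mpow {n : Type} [Fintype n] [DecidableEq n]
    (A : Matrix n n ℂ) (p : ℝ) : Matrix n n ℂ :=
  matFun (fun x => x ^ p) A

/-- The matrix of the map `v ↦ M (v ⊗ |Γ⟩_{BB̂})` from `H_A ⊗ H_Â` to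
`H_A ⊗ H_B ⊗ H_Â ⊗ H_B̂` (indices grouped as `(A B) × (Â B̂)`), where `M` acts on `A B`
and the identity acts on `Â`; the `B̂` input slot is fed by `|Γ⟩_{BB̂}`. -/
noncomputable def petzIso {a b : Type} [Fintype a] [Fintype b] [DecidableEq a] [DecidableEq b]
    (M : Matrix (a × b) (a × b) ℂ) :
    Matrix ((a × b) × (a × b)) (a × a) ℂ :=
  fun o p => M o.1 (p.1, o.2.2) * (if o.2.1 = p.2 then 1 else 0)

/-- Mathlib's former `Matrix.PosSemidef.sqrt` (removed upstream), with its old definition. -/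
noncomputable def Matrix.PosSemidef.sqrt {n : Type*} [Fintype n] [DecidableEq n] {𝕜 : Type*} [RCLike 𝕜]
    {A : Matrix n n 𝕜} (hA : A.PosSemidef) : Matrix n n 𝕜 :=
  (hA.1.eigenvectorUnitary : Matrix n n 𝕜) * diagonal ((↑) ∘ (√·) ∘ hA.1.eigenvalues) *
    (star (hA.1.eigenvectorUnitary : Matrix n n 𝕜))

/-!
Write `M = X_{AB}^{1/2} (X_A^{-1/2} ⊗ I)`. Feeding `|Γ⟩_{BB̂}` into both copies of `V` contracts
the two `B` indices of `M†M` against each other, so `V†V = Tr_B (M†M) ⊗ I_Â`. An operator of the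
form `N ⊗ I_B` can be pulled out of `Tr_B` on either side, hence
`Tr_B (M†M) = X_A^{-1/2} Tr_B (X_{AB}) X_A^{-1/2} = X_A^{-1/2} X_A X_A^{-1/2} = I`.
-/

namespace Matrix.PosSemidef

variable {n 𝕜 : Type*} [Fintype n] [DecidableEq n] [RCLike 𝕜] {A : Matrix n n 𝕜}

theorem isHermitian_sqrt (hA : A.PosSemidef) : (PosSemidef.sqrt hA).IsHermitian := by
  refine isHermitian_mul_mul_conjTranspose _ (isHermitian_diagonal_of_self_adjoint _ ?_)
  ext i
  simp

theorem sqrt_mul_self (hA : A.PosSemidef) : PosSemidef.sqrt hA * PosSemidef.sqrt hA = A := by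
  conv_rhs => rw [hA.1.spectral_theorem, Unitary.conjStarAlgAut_apply]
  simp only [PosSemidef.sqrt, Matrix.mul_assoc]
  rw [← Matrix.mul_assoc (star _) (hA.1.eigenvectorUnitary : Matrix n n 𝕜),
    Unitary.coe_star_mul_self, Matrix.one_mul, ← Matrix.mul_assoc (diagonal _),
    diagonal_mul_diagonal]
  congr 3
  ext i
  simp only [Function.comp_apply, ← RCLike.ofReal_mul, Real.mul_self_sqrt (hA.eigenvalues_nonneg i)]

end Matrix.PosSemidef

section PartialTrace

variable {a b : Type} [Fintype a] [Fintype b] [DecidableEq b]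

theorem ptraceB_kronecker_one_mul (N : Matrix a a ℂ) (Y : Matrix (a × b) (a × b) ℂ) :
    ptraceB ((N ⊗ₖ (1 : Matrix b b ℂ)) * Y) = N * ptraceB Y := by
  ext i j
  simp only [ptraceB, mul_apply, kroneckerMap_apply, one_apply, mul_ite, mul_one, mul_zero,
    ite_mul, zero_mul, Fintype.sum_prod_type, Finset.sum_ite_eq, Finset.mem_univ, if_true,
    Finset.mul_sum]
  exact Finset.sum_comm

theorem ptraceB_mul_kronecker_one (N : Matrix a a ℂ) (Y : Matrix (a × b) (a × b) ℂ) :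
    ptraceB (Y * (N ⊗ₖ (1 : Matrix b b ℂ))) = ptraceB Y * N := by
  ext i j
  simp only [ptraceB, mul_apply, kroneckerMap_apply, one_apply, mul_ite, mul_one, mul_zero,
    Fintype.sum_prod_type, Finset.sum_ite_eq', Finset.mem_univ, if_true, Finset.sum_mul]
  exact Finset.sum_comm

theorem conjTranspose_petzIso_mul_petzIso [DecidableEq a] (M : Matrix (a × b) (a × b) ℂ) :
    (petzIso M)ᴴ * petzIso M = ptraceB (Mᴴ * M) ⊗ₖ (1 : Matrix a a ℂ) := by
  ext ⟨i, j⟩ ⟨k, l⟩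
  by_cases hjl : j = l
  · subst hjl
    simp only [mul_apply, conjTranspose_apply, petzIso, mul_ite, mul_one, mul_zero,
      RCLike.star_def, apply_ite (starRingEnd ℂ), map_zero, ite_mul, zero_mul,
      Fintype.sum_prod_type, Finset.sum_ite_irrel, Finset.sum_const_zero, Finset.sum_ite_eq',
      Finset.mem_univ, if_true, kroneckerMap_apply, ptraceB, one_apply_eq]
    exact Finset.sum_comm_cycle
  · simp [mul_apply, petzIso, Fintype.sum_prod_type, hjl, Ne.symm hjl, apply_ite (starRingEnd ℂ)]

theorem conjTranspose_petzIso_mul_petzIso_eq_one [DecidableEq a] {S : Matrix (a × b) (a × b) ℂ}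
    {N : Matrix a a ℂ} (hN : N.IsHermitian) (h : N * ptraceB (Sᴴ * S) * N = 1) :
    (petzIso (S * (N ⊗ₖ (1 : Matrix b b ℂ))))ᴴ * petzIso (S * (N ⊗ₖ (1 : Matrix b b ℂ))) = 1 := by
  rw [conjTranspose_petzIso_mul_petzIso, conjTranspose_mul, conjTranspose_kronecker, hN.eq,
    conjTranspose_one, Matrix.mul_assoc, ← Matrix.mul_assoc Sᴴ, ptraceB_kronecker_one_mul,
    ptraceB_mul_kronecker_one, ← Matrix.mul_assoc, h, one_kronecker_one]

end PartialTrace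

/-- The operator `V = X_{AB}^{1/2}(X_A^{-1/2} ⊗ I_Â)|Γ⟩_{BB̂}` is an isometry: `V†V = I`. -/
theorem stmt_8 (a b : ℕ) (XAB : Matrix (Fin a × Fin b) (Fin a × Fin b) ℂ)
    (hXAB : XAB.PosDef) (hXA : (ptraceB XAB).PosDef) :
    (petzIso (PosSemidef.sqrt hXAB.posSemidef *
        ((PosSemidef.sqrt hXA.posSemidef)⁻¹ ⊗ₖ (1 : Matrix (Fin b) (Fin b) ℂ))))ᴴ *
      petzIso (PosSemidef.sqrt hXAB.posSemidef *
        ((PosSemidef.sqrt hXA.posSemidef)⁻¹ ⊗ₖ (1 : Matrix (Fin b) (Fin b) ℂ))) = 1 := by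
  set T := PosSemidef.sqrt hXA.posSemidef
  have hTT : T * T = ptraceB XAB := hXA.posSemidef.sqrt_mul_self
  have hT : IsUnit T.det :=
    (isUnit_iff_isUnit_det T).mp (isUnit_of_mul_isUnit_left (hTT ▸ hXA.isUnit))
  refine conjTranspose_petzIso_mul_petzIso_eq_one hXA.posSemidef.isHermitian_sqrt.inv ?_
  rw [hXAB.posSemidef.isHermitian_sqrt.eq, hXAB.posSemidef.sqrt_mul_self, ← hTT,
    ← Matrix.mul_assoc, mul_nonsing_inv_cancel_right _ _ hT, nonsing_inv_mul _ hT]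
end

section
/- For α ∈ [1/2,1), positive definite X and Y on ℂ^d: sup over positive definite density operators τ of [−Tr{X^{1/2} Y^{(1−α)/α} X^{1/2} τ^{(α−1)/α}}] = −‖X^{1/2} Y^{(1−α)/α} X^{1/2}‖_α, where ‖Z‖_α = (Tr Z^α)^{1/α} for Z positive semi-definite. -/
open Matrix Kronecker BigOperators
open scoped Classical ComplexOrder

/-!
Write `W = ∑ᵢ wᵢ |uᵢ⟩⟨uᵢ|`, `τ = ∑ⱼ tⱼ |vⱼ⟩⟨vⱼ|` and `r = (α - 1) / α`. Then
`Tr (W τ ^ r) = ∑ᵢⱼ cᵢⱼ wᵢ tⱼ ^ r` with `cᵢⱼ = |⟨uᵢ, vⱼ⟩|²` doubly stochastic. Weighted AM-GM gives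
`wᵢ ^ α s ^ (1 - α) ≤ α wᵢ tⱼ ^ r + (1 - α) s tⱼ` for every `s ≥ 0`, the powers of `tⱼ` cancelling
because `r α = α - 1`. Averaging against `c` and choosing `s = (∑ᵢ wᵢ ^ α) ^ (1 / α)` gives
`Tr (W τ ^ r) ≥ (Tr W ^ α) ^ (1 / α)`, with equality at `τ = W ^ α / Tr W ^ α`.
-/

open Unitary

namespace Real

lemma rpow_mul_rpow_le_add {α w t c : ℝ} (hα0 : 0 < α) (hα1 : α < 1)
    (hw : 0 ≤ w) (ht : 0 < t) (hc : 0 ≤ c) :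
    w ^ α * c ^ (1 - α) ≤ α * (w * t ^ ((α - 1) / α)) + (1 - α) * (c * t) := by
  have hamgm := geom_mean_le_arith_mean2_weighted hα0.le (sub_nonneg.2 hα1.le)
    (mul_nonneg hw (rpow_nonneg ht.le ((α - 1) / α))) (mul_nonneg hc ht.le)
    (add_sub_cancel α 1)
  have ht_cancel : (t ^ ((α - 1) / α)) ^ α * t ^ (1 - α) = 1 := by
    rw [← rpow_mul ht.le, ← rpow_add ht, div_mul_cancel₀ _ hα0.ne',
      sub_add_sub_cancel', sub_self, rpow_zero]
  calc w ^ α * c ^ (1 - α)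
      = (w * t ^ ((α - 1) / α)) ^ α * (c * t) ^ (1 - α) := by
        rw [mul_rpow hw (rpow_nonneg ht.le _), mul_rpow hc ht.le]
        linear_combination (w ^ α * c ^ (1 - α)) * ht_cancel.symm
    _ ≤ _ := hamgm

theorem sum_rpow_rpow_le_of_mem_doublyStochastic {n : Type*} [Fintype n] [DecidableEq n] {α : ℝ}
    (hα0 : 0 < α) (hα1 : α < 1) {w t : n → ℝ} (hw : ∀ i, 0 ≤ w i) (ht : ∀ j, 0 < t j)
    (ht_sum : ∑ j, t j = 1) {c : Matrix n n ℝ} (hc : c ∈ doublyStochastic ℝ n) :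
    (∑ i, w i ^ α) ^ (1 / α) ≤ ∑ i, ∑ j, c i j * (w i * t j ^ ((α - 1) / α)) := by
  set T := ∑ i, w i ^ α
  set S := ∑ i, ∑ j, c i j * (w i * t j ^ ((α - 1) / α))
  have hT : 0 ≤ T := Finset.sum_nonneg fun i _ => rpow_nonneg (hw i) α
  set s := T ^ (1 / α)
  have hs : 0 ≤ s := rpow_nonneg hT _
  have hTs : T * s ^ (1 - α) = s := by
    rw [← rpow_mul hT, ← rpow_one_add' hT]
    · congr 1; field_simp; ring
    · positivity
  have key : T * s ^ (1 - α) ≤ α * S + (1 - α) * s := by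
    calc T * s ^ (1 - α)
        = ∑ i, ∑ j, c i j * (w i ^ α * s ^ (1 - α)) := by
          simp only [← Finset.sum_mul, sum_row_of_mem_doublyStochastic hc, one_mul]
          rfl
      _ ≤ ∑ i, ∑ j, c i j * (α * (w i * t j ^ ((α - 1) / α)) + (1 - α) * (s * t j)) := by
          gcongr with i _ j _
          · exact nonneg_of_mem_doublyStochastic hc
          · exact rpow_mul_rpow_le_add hα0 hα1 (hw i) (ht j) hs
      _ = α * S + (1 - α) * s := by
          have hcol : ∑ i, ∑ j, c i j * ((1 - α) * (s * t j)) = (1 - α) * s := by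
            rw [Finset.sum_comm]
            simp only [← Finset.sum_mul, sum_col_of_mem_doublyStochastic hc, one_mul,
              ← Finset.mul_sum, ht_sum, mul_one]
          simp only [mul_add, Finset.sum_add_distrib, hcol, S, Finset.mul_sum]
          congr 1
          exact Finset.sum_congr rfl fun i _ => Finset.sum_congr rfl fun j _ => by ring
  have : α * s ≤ α * S := by linarith
  exact le_of_mul_le_mul_left this hα0

end Real

lemma matFun_eq_cfc {n : Type} [Fintype n] [DecidableEq n] (f : ℝ → ℝ)
    (A : Matrix n n ℂ) : matFun f A = cfc f A := by
  unfold matFun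
  split_ifs with hA
  · rw [hA.cfc_eq, IsHermitian.cfc, conjStarAlgAut_apply]
    rfl
  · exact (cfc_apply_of_not_predicate A hA).symm

lemma mpow_eq_cfc {n : Type} [Fintype n] [DecidableEq n] (A : Matrix n n ℂ) (p : ℝ) :
    mpow A p = cfc (fun x : ℝ => x ^ p) A :=
  matFun_eq_cfc _ A

namespace Matrix

variable {n 𝕜 : Type*} [Fintype n] [DecidableEq n] [RCLike 𝕜]

lemma IsHermitian.trace_cfc {A : Matrix n n 𝕜} (hA : A.IsHermitian) (f : ℝ → ℝ) :
    (cfc f A).trace = ∑ i, (f (hA.eigenvalues i) : 𝕜) := by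
  rw [hA.cfc_eq, IsHermitian.cfc, conjStarAlgAut_apply, trace_mul_cycle, coe_star_mul_self,
    one_mul, trace_diagonal]
  rfl

lemma IsHermitian.posDef_cfc {A : Matrix n n 𝕜} (hA : A.IsHermitian) {f : ℝ → ℝ}
    (hf : ∀ i, 0 < f (hA.eigenvalues i)) : (cfc f A).PosDef := by
  rw [hA.cfc_eq, IsHermitian.cfc, conjStarAlgAut_apply,
    isUnit_coe.posDef_star_right_conjugate_iff, posDef_diagonal_iff]
  simpa using hf

lemma PosDef.cfc_rpow {A : Matrix n n 𝕜} (hA : A.PosDef) (p : ℝ) :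
    (cfc (fun x : ℝ => x ^ p) A).PosDef :=
  hA.isHermitian.posDef_cfc fun i => Real.rpow_pos_of_pos (hA.eigenvalues_pos i) p

lemma norm_sq_entries_mem_doublyStochastic {U : Matrix n n 𝕜} (hU : U ∈ unitaryGroup n 𝕜) :
    (of fun i j => ‖U i j‖ ^ 2) ∈ doublyStochastic ℝ n := by
  have hrow : ∀ {V : Matrix n n 𝕜}, V ∈ unitaryGroup n 𝕜 → ∀ i, ∑ j, ‖V i j‖ ^ 2 = 1 := by
    intro V hV i
    have := congr_fun₂ (mem_unitaryGroup_iff.mp hV) i i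
    simp only [mul_apply, star_apply, one_apply_eq, RCLike.star_def, RCLike.mul_conj] at this
    exact_mod_cast this
  refine mem_doublyStochastic_iff_sum.mpr ⟨fun i j => sq_nonneg ‖U i j‖, hrow hU, fun j => ?_⟩
  simpa [norm_star] using hrow (star_mem hU) j

lemma re_trace_conj_diagonal_mul_conj_diagonal (U V : unitaryGroup n 𝕜)
    (a b : n → ℝ) :
    RCLike.re (conjStarAlgAut 𝕜 _ U (diagonal (RCLike.ofReal ∘ a)) *
      conjStarAlgAut 𝕜 _ V (diagonal (RCLike.ofReal ∘ b))).trace =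
      ∑ i, ∑ j, ‖(star (U : Matrix n n 𝕜) * V) i j‖ ^ 2 * (a i * b j) := by
  set M := star (U : Matrix n n 𝕜) * V
  have hM : star M = star (V : Matrix n n 𝕜) * U := by simp [M, star_mul]
  have : conjStarAlgAut 𝕜 _ U (diagonal (RCLike.ofReal ∘ a)) *
      conjStarAlgAut 𝕜 _ V (diagonal (RCLike.ofReal ∘ b)) =
      (U : Matrix n n 𝕜) * (diagonal (RCLike.ofReal ∘ a) * M * diagonal (RCLike.ofReal ∘ b) *
        star M) * star (U : Matrix n n 𝕜) := by
    simp only [conjStarAlgAut_apply, hM, M, Matrix.mul_assoc, SetLike.coe_mem,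
      Unitary.mul_star_self_of_mem, Matrix.mul_one]
  rw [this, trace_mul_cycle, ← Matrix.mul_assoc, coe_star_mul_self, Matrix.one_mul, trace,
    map_sum]
  refine Finset.sum_congr rfl fun i _ => ?_
  rw [diag_apply, mul_apply, map_sum]
  refine Finset.sum_congr rfl fun j _ => ?_
  have : (diagonal (RCLike.ofReal ∘ a) * M * diagonal (RCLike.ofReal ∘ b) : Matrix n n 𝕜) i j *
      star M j i = ((‖M i j‖ ^ 2 * (a i * b j) : ℝ) : 𝕜) := by
    simp only [mul_diagonal, diagonal_mul, star_apply, Function.comp_apply, RCLike.star_def]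
    push_cast
    rw [← RCLike.mul_conj]
    ring
  rw [this, RCLike.ofReal_re]

theorem rpow_re_trace_cfc_le_re_trace_mul_cfc {W τ : Matrix n n 𝕜} (hW : W.PosSemidef)
    (hτ : τ.PosDef) (hτ_tr : τ.trace = 1) {α : ℝ} (hα0 : 0 < α) (hα1 : α < 1) :
    RCLike.re (cfc (fun x : ℝ => x ^ α) W).trace ^ (1 / α) ≤
      RCLike.re (W * cfc (fun x : ℝ => x ^ ((α - 1) / α)) τ).trace := by
  have ht_sum : ∑ j, hτ.isHermitian.eigenvalues j = 1 := by
    have := hτ.isHermitian.trace_eq_sum_eigenvalues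
    rw [hτ_tr] at this
    exact_mod_cast this.symm
  simp only [hW.isHermitian.trace_cfc, map_sum, RCLike.ofReal_re]
  conv_rhs => rw [hW.isHermitian.spectral_theorem, hτ.isHermitian.cfc_eq, IsHermitian.cfc,
    re_trace_conj_diagonal_mul_conj_diagonal]
  exact Real.sum_rpow_rpow_le_of_mem_doublyStochastic hα0 hα1 hW.eigenvalues_nonneg
    hτ.eigenvalues_pos ht_sum
    (norm_sq_entries_mem_doublyStochastic (mul_mem (star_mem (Subtype.prop _)) (Subtype.prop _)))

theorem exists_posDef_trace_eq_one_re_trace_mul_cfc_eq [Nonempty n] {W : Matrix n n 𝕜}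
    (hW : W.PosDef) {α : ℝ} (hα0 : 0 < α) :
    ∃ τ : Matrix n n 𝕜, τ.PosDef ∧ τ.trace = 1 ∧
      RCLike.re (W * cfc (fun x : ℝ => x ^ ((α - 1) / α)) τ).trace =
        RCLike.re (cfc (fun x : ℝ => x ^ α) W).trace ^ (1 / α) := by
  set w := hW.isHermitian.eigenvalues
  set T := ∑ i, w i ^ α
  have hw : ∀ i, 0 < w i := hW.eigenvalues_pos
  have hT : 0 < T := Finset.sum_pos (fun i _ => Real.rpow_pos_of_pos (hw i) α) Finset.univ_nonempty
  have hT_eq : RCLike.re (cfc (fun x : ℝ => x ^ α) W).trace = T := by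
    simp only [hW.isHermitian.trace_cfc, map_sum, RCLike.ofReal_re, T, w]
  refine ⟨cfc (fun x : ℝ => x ^ α / T) W,
    hW.isHermitian.posDef_cfc fun i => div_pos (Real.rpow_pos_of_pos (hw i) α) hT, ?_, ?_⟩
  · rw [hW.isHermitian.trace_cfc, ← RCLike.ofReal_sum, ← Finset.sum_div, div_self hT.ne',
      RCLike.ofReal_one]
  · have hspec := finite_real_spectrum (A := W)
    rw [← cfc_comp (fun x : ℝ => x ^ ((α - 1) / α)) (fun x : ℝ => x ^ α / T) W
      hW.isHermitian.isSelfAdjoint ((hspec.image _).continuousOn _) (hspec.continuousOn _)]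
    nth_rewrite 1 [← cfc_id' ℝ W hW.isHermitian.isSelfAdjoint]
    rw [← cfc_mul _ _ W (hspec.continuousOn _) (hspec.continuousOn _), hW.isHermitian.trace_cfc,
      ← RCLike.ofReal_sum, RCLike.ofReal_re, hT_eq]
    have hterm : ∀ i, w i * (w i ^ α / T) ^ ((α - 1) / α) = w i ^ α / T ^ ((α - 1) / α) := by
      intro i
      rw [Real.div_rpow (Real.rpow_nonneg (hw i).le _) hT.le, ← Real.rpow_mul (hw i).le,
        mul_div_cancel₀ _ hα0.ne', Real.rpow_sub_one (hw i).ne', mul_div_assoc',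
        mul_div_cancel₀ _ (hw i).ne']
    calc ∑ i, w i * (w i ^ α / T) ^ ((α - 1) / α)
        = T / T ^ ((α - 1) / α) := by simp only [hterm, ← Finset.sum_div, T]
      _ = T ^ (1 - (α - 1) / α) := by rw [Real.rpow_sub hT, Real.rpow_one]
      _ = T ^ (1 / α) := by congr 1; field_simp; ring

theorem iSup_neg_re_trace_mul_cfc_rpow {W : Matrix n n 𝕜} (hW : W.PosDef) {α : ℝ}
    (hα0 : 0 < α) (hα1 : α < 1) :
    ⨆ τ : {τ : Matrix n n 𝕜 // τ.PosDef ∧ τ.trace = 1},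
        -RCLike.re (W * cfc (fun x : ℝ => x ^ ((α - 1) / α)) (τ : Matrix n n 𝕜)).trace =
      -(RCLike.re (cfc (fun x : ℝ => x ^ α) W).trace ^ (1 / α)) := by
  rcases isEmpty_or_nonempty n with hn | hn
  · have : IsEmpty {τ : Matrix n n 𝕜 // τ.PosDef ∧ τ.trace = 1} :=
      ⟨fun τ => by simpa [trace] using τ.2.2⟩
    simp [trace, hα0.ne']
  · obtain ⟨τ₀, hτ₀, hτ₀_tr, hτ₀_val⟩ := exists_posDef_trace_eq_one_re_trace_mul_cfc_eq hW hα0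
    have hle : ∀ τ : {τ : Matrix n n 𝕜 // τ.PosDef ∧ τ.trace = 1},
        -RCLike.re (W * cfc (fun x : ℝ => x ^ ((α - 1) / α)) (τ : Matrix n n 𝕜)).trace ≤
          -(RCLike.re (cfc (fun x : ℝ => x ^ α) W).trace ^ (1 / α)) := fun τ =>
      neg_le_neg (rpow_re_trace_cfc_le_re_trace_mul_cfc hW.posSemidef τ.2.1 τ.2.2 hα0 hα1)
    have : Nonempty {τ : Matrix n n 𝕜 // τ.PosDef ∧ τ.trace = 1} := ⟨⟨τ₀, hτ₀, hτ₀_tr⟩⟩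
    refine le_antisymm (ciSup_le hle) ?_
    rw [← hτ₀_val]
    exact le_ciSup ⟨_, Set.forall_mem_range.2 hle⟩ (⟨τ₀, hτ₀, hτ₀_tr⟩ : {τ : Matrix n n 𝕜 // _})

end Matrix

/-- Reverse-Hölder variational formula for `α ∈ [1/2,1)`:
`sup_{τ>0,Trτ=1} [−Tr{X^{1/2} Y^{(1−α)/α} X^{1/2} τ^{(α−1)/α}}]
  = −‖X^{1/2} Y^{(1−α)/α} X^{1/2}‖_α` where `‖Z‖_α = (Tr Z^α)^{1/α}`. -/
theorem stmt_14 (d : ℕ) (α : ℝ) (hα1 : 1/2 ≤ α) (hα2 : α < 1)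
    (X Y : Matrix (Fin d) (Fin d) ℂ) (hX : X.PosDef) (hY : Y.PosDef) :
    (⨆ τ : {τ : Matrix (Fin d) (Fin d) ℂ // τ.PosDef ∧ τ.trace = 1},
        (-((mpow X (1/2) * mpow Y ((1 - α)/α) * mpow X (1/2) *
            mpow (τ : Matrix (Fin d) (Fin d) ℂ) ((α - 1)/α)).trace.re))) =
      -(((mpow (mpow X (1/2) * mpow Y ((1 - α)/α) * mpow X (1/2)) α).trace.re) ^ (1/α)) := by
  have hα0 : 0 < α := by linarith
  have hX' : (mpow X (1/2)).PosDef := mpow_eq_cfc X _ ▸ hX.cfc_rpow _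
  have hY' : (mpow Y ((1 - α)/α)).PosDef := mpow_eq_cfc Y _ ▸ hY.cfc_rpow _
  have hW : (mpow X (1/2) * mpow Y ((1 - α)/α) * mpow X (1/2)).PosDef := by
    have := (IsUnit.posDef_star_right_conjugate_iff hX'.isUnit).mpr hY'
    rwa [star_eq_conjTranspose, hX'.isHermitian.eq] at this
  simp only [mpow_eq_cfc _ α, mpow_eq_cfc _ ((α - 1)/α)]
  exact iSup_neg_re_trace_mul_cfc_rpow hW hα0 hα2
end

section
/- Let X = ∑_z λ_z |z⟩⟨z| and Y = ∑_z μ_z |z⟩⟨z| be commuting positive semi-definite operators with common eigenbasis, Y positive definite, let f be operator anti-monotone on (0,∞) (so x ↦ f(1/x) is concave on (0,∞)), and let τ = ∑_t ν_t |φ_t⟩⟨φ_t| be a positive definite density operator. Then ∑_{z,t} f(μ_z/ν_t) λ_z |⟨z|φ_t⟩|² ≤ ∑_z λ_z f(μ_z/τ_z), where τ_z = ⟨z|τ|z⟩. -/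
open Matrix Kronecker BigOperators
open scoped Classical ComplexOrder

/-!
Put `p t = ‖φ t z‖ ^ 2`, a probability vector because the `φ t` form an orthonormal basis, and
`a t = μ_z / ν_t`. For each `z` the claim is then `∑ p t f(a t) ≤ f((∑ p t / a t)⁻¹)`, Jensen's
inequality for the concave function `x ↦ f(1/x)`. It is read off from operator anti-monotonicity
by compressing to the unit vector `v = √p`: `⟨v, f(diag a) v⟩ = ∑ p t f(a t)`, while
`⟨v, f(B) v⟩ = f(c)` whenever `B v = c v`. Rank-one perturbations of `diag a` having `v` as an
eigenvector with eigenvalue `c` exist above `diag a` for every `c > ∑ p t a t`, and (by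
Cauchy–Schwarz) positive definite ones below `diag a` for every `0 < c < (∑ p t / a t)⁻¹`.
The first kind, used with two points, shows that `f` is left-continuous; the second then gives
the inequality in the limit `c → (∑ p t / a t)⁻¹`.
-/

open Filter Topology

section Diagonal

variable {n : Type} [DecidableEq n]

lemma isHermitian_diagonal_ofReal (a : n → ℝ) : (diagonal fun t => (a t : ℂ)).IsHermitian :=
  isHermitian_diagonal_of_self_adjoint _ (by ext t; simp)

lemma posDef_diagonal_ofReal {a : n → ℝ} (ha : ∀ t, 0 < a t) :
    (diagonal fun t => (a t : ℂ)).PosDef :=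
  posDef_diagonal_iff.mpr fun t => Complex.zero_lt_real.mpr (ha t)

variable [Fintype n]

lemma diagonal_comp_mulVec_eq_smul {d : n → ℝ} {w : n → ℂ} {c : ℝ} (g : ℝ → ℝ)
    (h : diagonal (fun i => (d i : ℂ)) *ᵥ w = (c : ℂ) • w) :
    diagonal (fun i => (g (d i) : ℂ)) *ᵥ w = (g c : ℂ) • w := by
  ext i
  have hi := congrFun h i
  simp only [mulVec_diagonal, Pi.smul_apply, smul_eq_mul] at hi ⊢
  rcases eq_or_ne (w i) 0 with h0 | h0
  · simp [h0]
  · rw [mul_comm, mul_comm (c : ℂ)] at hi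
    rw [Complex.ofReal_inj.mp (mul_left_cancel₀ h0 hi)]

end Diagonal

section MatFun

variable {n : Type} [Fintype n] [DecidableEq n]

theorem matFun_mulVec_of_mulVec_eq_smul (f : ℝ → ℝ) {A : Matrix n n ℂ} (hA : A.IsHermitian)
    {v : n → ℂ} {c : ℝ} (hv : A *ᵥ v = (c : ℂ) • v) : matFun f A *ᵥ v = (f c : ℂ) • v := by
  set U : Matrix n n ℂ := (hA.eigenvectorUnitary : Matrix n n ℂ)
  have hUU : U * star U = 1 := Unitary.mul_star_self_of_mem hA.eigenvectorUnitary.2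
  have hdiag : diagonal (fun i => (hA.eigenvalues i : ℂ)) *ᵥ (star U *ᵥ v)
      = (c : ℂ) • (star U *ᵥ v) := by
    have h : star U * A * U = diagonal (fun i => (hA.eigenvalues i : ℂ)) :=
      (Unitary.conjStarAlgAut_star_apply _ _).symm.trans
        hA.conjStarAlgAut_star_eigenvectorUnitary
    rw [← h, mulVec_mulVec, Matrix.mul_assoc, Matrix.mul_assoc, hUU, Matrix.mul_one,
      ← mulVec_mulVec, hv, mulVec_smul]
  rw [matFun, dif_pos hA, ← mulVec_mulVec, ← mulVec_mulVec, diagonal_comp_mulVec_eq_smul f hdiag,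
    mulVec_smul, mulVec_mulVec, hUU, one_mulVec]

theorem matFun_diagonal (f : ℝ → ℝ) (a : n → ℝ) :
    matFun f (diagonal fun i => (a i : ℂ)) = diagonal fun i => (f (a i) : ℂ) := by
  ext i j
  have h := matFun_mulVec_of_mulVec_eq_smul f (isHermitian_diagonal_ofReal a)
    (v := Pi.single j 1) (c := a j) (by ext k; simp [Pi.single_apply])
  have hij := congrFun h i
  rcases eq_or_ne i j with rfl | hne
  · simpa [mulVec_single_one] using hij
  · simpa [mulVec_single_one, hne] using hij

end MatFun

section QuadraticForm

variable {n : Type} [Fintype n]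

lemma norm_star_dotProduct_sq_le {a : n → ℝ} (ha : ∀ t, 0 < a t) (w x : n → ℂ) :
    ‖star w ⬝ᵥ x‖ ^ 2 ≤ (∑ t, ‖w t‖ ^ 2 / a t) * ∑ t, ‖x t‖ ^ 2 * a t := by
  have hsum : ‖star w ⬝ᵥ x‖ ≤ ∑ t, ‖w t‖ * ‖x t‖ :=
    (norm_sum_le _ _).trans_eq (by simp)
  calc ‖star w ⬝ᵥ x‖ ^ 2 ≤ (∑ t, ‖w t‖ * ‖x t‖) ^ 2 := by gcongr
    _ ≤ _ := Finset.sum_sq_le_sum_mul_sum_of_sq_le_mul _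
        (fun t _ => div_nonneg (sq_nonneg _) (ha t).le)
        (fun t _ => mul_nonneg (sq_nonneg _) (ha t).le)
        (fun t _ => by field_simp [(ha t).ne']; rfl)

lemma star_dotProduct_vecMulVec_mulVec (w x : n → ℂ) :
    star x ⬝ᵥ (vecMulVec w (star w) *ᵥ x) = ((‖star w ⬝ᵥ x‖ ^ 2 : ℝ) : ℂ) := by
  rw [vecMulVec_mulVec, Complex.ofReal_pow, ← Complex.mul_conj', op_smul_eq_smul, dotProduct_smul,
    smul_eq_mul, mul_comm, ← Complex.star_def, star_dotProduct, mul_comm]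

variable [DecidableEq n]

lemma star_dotProduct_diagonal_mulVec (g : n → ℝ) (x : n → ℂ) :
    star x ⬝ᵥ (diagonal (fun t => (g t : ℂ)) *ᵥ x) = ((∑ t, ‖x t‖ ^ 2 * g t : ℝ) : ℂ) := by
  simp only [dotProduct, mulVec_diagonal, Pi.star_apply, Complex.ofReal_sum, Complex.ofReal_mul,
    Complex.ofReal_pow]
  refine Finset.sum_congr rfl fun t _ => ?_
  rw [← Complex.mul_conj', Complex.star_def]
  ring

lemma isHermitian_diagonal_sub_smul_vecMulVec (a : n → ℝ) (w : n → ℂ) (s : ℝ) :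
    (diagonal (fun t => (a t : ℂ)) - s • vecMulVec w (star w)).IsHermitian :=
  (isHermitian_diagonal_ofReal a).sub
    ((posSemidef_vecMulVec_self_star w).isHermitian.smul (IsSelfAdjoint.all s))

theorem posDef_diagonal_sub_smul_vecMulVec {a : n → ℝ} (ha : ∀ t, 0 < a t) (w : n → ℂ) {s : ℝ}
    (hs0 : 0 ≤ s) (hs : s * ∑ t, ‖w t‖ ^ 2 / a t < 1) :
    (diagonal (fun t => (a t : ℂ)) - s • vecMulVec w (star w)).PosDef := by
  refine PosDef.of_dotProduct_mulVec_pos (isHermitian_diagonal_sub_smul_vecMulVec a w s)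
    fun x hx => ?_
  have hx2 : 0 < ∑ t, ‖x t‖ ^ 2 * a t := by
    obtain ⟨t, ht⟩ := Function.ne_iff.mp hx
    exact Finset.sum_pos' (fun t _ => mul_nonneg (sq_nonneg _) (ha t).le)
      ⟨t, Finset.mem_univ t, mul_pos (pow_pos (norm_pos_iff.mpr ht) 2) (ha t)⟩
  have hcs := norm_star_dotProduct_sq_le ha w x
  rw [sub_mulVec, dotProduct_sub, smul_mulVec, dotProduct_smul, star_dotProduct_diagonal_mulVec,
    star_dotProduct_vecMulVec_mulVec, Complex.real_smul, ← Complex.ofReal_mul,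
    ← Complex.ofReal_sub, Complex.zero_lt_real]
  nlinarith [mul_le_mul_of_nonneg_left hcs hs0]

end QuadraticForm

section Tilt

variable {n : Type} [Fintype n] {p a : n → ℝ}

noncomputable def sqrtVec (p : n → ℝ) : n → ℂ := fun t => (√(p t) : ℂ)

noncomputable def tiltVec (p a : n → ℝ) (c : ℝ) : n → ℂ := fun t => (√(p t) * (a t - c) : ℝ)

lemma star_tiltVec_dotProduct_sqrtVec (hp0 : ∀ t, 0 ≤ p t) (hp1 : ∑ t, p t = 1) (c : ℝ) :
    star (tiltVec p a c) ⬝ᵥ sqrtVec p = ((∑ t, p t * a t - c : ℝ) : ℂ) := by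
  simp only [dotProduct, tiltVec, sqrtVec, Pi.star_apply, Complex.star_def, Complex.conj_ofReal,
    ← Complex.ofReal_mul, ← Complex.ofReal_sum]
  congr 1
  calc ∑ t, √(p t) * (a t - c) * √(p t) = ∑ t, (p t * a t - c * p t) :=
        Finset.sum_congr rfl fun t _ => by linear_combination (a t - c) * Real.mul_self_sqrt (hp0 t)
    _ = ∑ t, p t * a t - c := by rw [Finset.sum_sub_distrib, ← Finset.mul_sum, hp1, mul_one]

lemma sum_mul_sub_sq_div (hp1 : ∑ t, p t = 1) (ha : ∀ t, 0 < a t) (c : ℝ) :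
    ∑ t, p t * (a t - c) ^ 2 / a t = ∑ t, p t * a t - 2 * c + c ^ 2 * ∑ t, p t / a t := by
  calc ∑ t, p t * (a t - c) ^ 2 / a t = ∑ t, (p t * a t - 2 * c * p t + c ^ 2 * (p t / a t)) :=
        Finset.sum_congr rfl fun t _ => by field_simp [(ha t).ne']; ring
    _ = _ := by rw [Finset.sum_add_distrib, Finset.sum_sub_distrib, ← Finset.mul_sum,
          ← Finset.mul_sum, hp1, mul_one]

lemma lt_sum_mul_of_mul_sum_div_lt_one (hp0 : ∀ t, 0 ≤ p t) (hp1 : ∑ t, p t = 1)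
    (ha : ∀ t, 0 < a t) {c : ℝ} (hc0 : 0 < c) (hc : c * ∑ t, p t / a t < 1) :
    c < ∑ t, p t * a t := by
  have hvar : 0 ≤ ∑ t, p t * (a t - c) ^ 2 / a t :=
    Finset.sum_nonneg fun t _ => div_nonneg (mul_nonneg (hp0 t) (sq_nonneg _)) (ha t).le
  rw [sum_mul_sub_sq_div hp1 ha] at hvar
  nlinarith

variable [DecidableEq n]

/-- Since `⟨tiltVec p a c, sqrtVec p⟩ = ∑ p t a t - c`, the rank-one correction turns
`sqrtVec p` into an eigenvector with eigenvalue `c`. -/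
noncomputable def tiltMatrix (p a : n → ℝ) (c : ℝ) : Matrix n n ℂ :=
  diagonal (fun t => (a t : ℂ)) -
    (∑ t, p t * a t - c)⁻¹ • vecMulVec (tiltVec p a c) (star (tiltVec p a c))

lemma isHermitian_tiltMatrix (p a : n → ℝ) (c : ℝ) : (tiltMatrix p a c).IsHermitian :=
  isHermitian_diagonal_sub_smul_vecMulVec _ _ _

lemma star_sqrtVec_dotProduct_diagonal_mulVec (hp0 : ∀ t, 0 ≤ p t) (g : n → ℝ) :
    star (sqrtVec p) ⬝ᵥ (diagonal (fun t => (g t : ℂ)) *ᵥ sqrtVec p)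
      = ((∑ t, p t * g t : ℝ) : ℂ) := by
  simp [star_dotProduct_diagonal_mulVec, sqrtVec, Real.sq_sqrt (hp0 _)]

lemma star_sqrtVec_dotProduct_sqrtVec (hp0 : ∀ t, 0 ≤ p t) (hp1 : ∑ t, p t = 1) :
    star (sqrtVec p) ⬝ᵥ sqrtVec p = 1 := by
  simpa [hp1] using star_sqrtVec_dotProduct_diagonal_mulVec hp0 (fun _ => 1)

theorem tiltMatrix_mulVec_sqrtVec (hp0 : ∀ t, 0 ≤ p t) (hp1 : ∑ t, p t = 1) {c : ℝ}
    (hc : c ≠ ∑ t, p t * a t) : tiltMatrix p a c *ᵥ sqrtVec p = (c : ℂ) • sqrtVec p := by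
  have hm : ∑ t, p t * a t - c ≠ 0 := sub_ne_zero.mpr hc.symm
  rw [tiltMatrix, sub_mulVec, smul_mulVec, vecMulVec_mulVec,
    star_tiltVec_dotProduct_sqrtVec hp0 hp1, op_smul_eq_smul, Complex.coe_smul, smul_smul,
    inv_mul_cancel₀ hm, one_smul]
  ext t
  simp only [Pi.sub_apply, Pi.smul_apply, mulVec_diagonal, sqrtVec, tiltVec, smul_eq_mul,
    Complex.ofReal_mul, Complex.ofReal_sub]
  ring

theorem posSemidef_tiltMatrix_sub_diagonal {c : ℝ} (hc : ∑ t, p t * a t < c) :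
    (tiltMatrix p a c - diagonal (fun t => (a t : ℂ))).PosSemidef := by
  rw [tiltMatrix, sub_sub_cancel_left, ← neg_smul, ← inv_neg, neg_sub]
  exact (posSemidef_vecMulVec_self_star _).smul (inv_nonneg.mpr (sub_pos.mpr hc).le)

theorem posSemidef_diagonal_sub_tiltMatrix {c : ℝ} (hc : c < ∑ t, p t * a t) :
    (diagonal (fun t => (a t : ℂ)) - tiltMatrix p a c).PosSemidef := by
  rw [tiltMatrix, sub_sub_cancel]
  exact (posSemidef_vecMulVec_self_star _).smul (inv_nonneg.mpr (sub_pos.mpr hc).le)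

theorem posDef_tiltMatrix_of_mul_lt_one (hp0 : ∀ t, 0 ≤ p t) (hp1 : ∑ t, p t = 1)
    (ha : ∀ t, 0 < a t) {c : ℝ} (hc0 : 0 < c) (hc : c * ∑ t, p t / a t < 1) :
    (tiltMatrix p a c).PosDef := by
  have hcm := lt_sum_mul_of_mul_sum_div_lt_one hp0 hp1 ha hc0 hc
  have hnorm : ∑ t, ‖tiltVec p a c t‖ ^ 2 / a t = ∑ t, p t * (a t - c) ^ 2 / a t :=
    Finset.sum_congr rfl fun t _ => by
      rw [tiltVec, Complex.norm_real, Real.norm_eq_abs, sq_abs, mul_pow, Real.sq_sqrt (hp0 t)]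
  refine posDef_diagonal_sub_smul_vecMulVec ha _ (inv_nonneg.mpr (sub_pos.mpr hcm).le) ?_
  rw [hnorm, sum_mul_sub_sq_div hp1 ha, inv_mul_lt_one₀ (sub_pos.mpr hcm)]
  nlinarith

lemma star_sqrtVec_dotProduct_matFun_diagonal_mulVec (f : ℝ → ℝ) (hp0 : ∀ t, 0 ≤ p t) :
    star (sqrtVec p) ⬝ᵥ (matFun f (diagonal fun t => (a t : ℂ)) *ᵥ sqrtVec p)
      = ((∑ t, p t * f (a t) : ℝ) : ℂ) := by
  rw [matFun_diagonal, star_sqrtVec_dotProduct_diagonal_mulVec hp0]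

lemma star_sqrtVec_dotProduct_matFun_tiltMatrix_mulVec (f : ℝ → ℝ) (hp0 : ∀ t, 0 ≤ p t)
    (hp1 : ∑ t, p t = 1) {c : ℝ} (hc : c ≠ ∑ t, p t * a t) :
    star (sqrtVec p) ⬝ᵥ (matFun f (tiltMatrix p a c) *ᵥ sqrtVec p) = (f c : ℂ) := by
  rw [matFun_mulVec_of_mulVec_eq_smul f (isHermitian_tiltMatrix p a c)
      (tiltMatrix_mulVec_sqrtVec hp0 hp1 hc),
    dotProduct_smul, star_sqrtVec_dotProduct_sqrtVec hp0 hp1, smul_eq_mul, mul_one]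

end Tilt

def OperatorAntitone (f : ℝ → ℝ) : Prop :=
  ∀ (n : Type) [Fintype n] [DecidableEq n] (A B : Matrix n n ℂ),
    A.PosDef → B.PosDef → (B - A).PosSemidef → (matFun f A - matFun f B).PosSemidef

namespace OperatorAntitone

variable {f : ℝ → ℝ} {n : Type} [Fintype n] [DecidableEq n] {p a : n → ℝ}

theorem star_dotProduct_matFun_mulVec_le (hf : OperatorAntitone f) {A B : Matrix n n ℂ}
    (hA : A.PosDef) (hB : B.PosDef) (hAB : (B - A).PosSemidef) (v : n → ℂ) :
    star v ⬝ᵥ (matFun f B *ᵥ v) ≤ star v ⬝ᵥ (matFun f A *ᵥ v) := by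
  have h := (hf n A B hA hB hAB).dotProduct_mulVec_nonneg v
  rwa [sub_mulVec, dotProduct_sub, sub_nonneg] at h

theorem apply_le_sum_of_lt (hf : OperatorAntitone f) (hp0 : ∀ t, 0 ≤ p t) (hp1 : ∑ t, p t = 1)
    (ha : ∀ t, 0 < a t) {c : ℝ} (hc : ∑ t, p t * a t < c) : f c ≤ ∑ t, p t * f (a t) := by
  have hpd := (posDef_diagonal_ofReal ha).add_posSemidef (posSemidef_tiltMatrix_sub_diagonal hc)
  rw [add_sub_cancel] at hpd
  have h := hf.star_dotProduct_matFun_mulVec_le (posDef_diagonal_ofReal ha) hpd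
    (posSemidef_tiltMatrix_sub_diagonal hc) (sqrtVec p)
  rw [star_sqrtVec_dotProduct_matFun_diagonal_mulVec f hp0,
    star_sqrtVec_dotProduct_matFun_tiltMatrix_mulVec f hp0 hp1 hc.ne'] at h
  exact_mod_cast h

theorem sum_le_apply_of_mul_lt_one (hf : OperatorAntitone f) (hp0 : ∀ t, 0 ≤ p t)
    (hp1 : ∑ t, p t = 1) (ha : ∀ t, 0 < a t) {c : ℝ} (hc0 : 0 < c)
    (hc : c * ∑ t, p t / a t < 1) : ∑ t, p t * f (a t) ≤ f c := by
  have hcm := lt_sum_mul_of_mul_sum_div_lt_one hp0 hp1 ha hc0 hc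
  have h := hf.star_dotProduct_matFun_mulVec_le (posDef_tiltMatrix_of_mul_lt_one hp0 hp1 ha hc0 hc)
    (posDef_diagonal_ofReal ha) (posSemidef_diagonal_sub_tiltMatrix hcm) (sqrtVec p)
  rw [star_sqrtVec_dotProduct_matFun_diagonal_mulVec f hp0,
    star_sqrtVec_dotProduct_matFun_tiltMatrix_mulVec f hp0 hp1 hcm.ne] at h
  exact_mod_cast h

theorem le_apply_of_forall_lt (hf : OperatorAntitone f) {x L : ℝ} (hx : 0 < x)
    (h : ∀ y, 0 < y → y < x → L ≤ f y) : L ≤ f x := by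
  -- just left of `x`, `f` lies below its chord over `[x / 2, x]`
  have hchord : ∀ θ ∈ Set.Ioo (0 : ℝ) 1, L ≤ f x + θ * (f (x / 2) - f x) := by
    rintro θ ⟨hθ0, hθ1⟩
    have hp0 : ∀ t, 0 ≤ (![θ, 1 - θ] : Fin 2 → ℝ) t :=
      Fin.forall_fin_two.mpr ⟨hθ0.le, sub_nonneg.mpr hθ1.le⟩
    have ha : ∀ t, 0 < (![x / 2, x] : Fin 2 → ℝ) t := Fin.forall_fin_two.mpr ⟨half_pos hx, hx⟩
    have hm : θ * (x / 2) + (1 - θ) * x < x := by nlinarith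
    have hm0 : 0 < θ * (x / 2) + (1 - θ) * x := by nlinarith
    calc L ≤ f ((θ * (x / 2) + (1 - θ) * x + x) / 2) := h _ (by linarith) (by linarith)
      _ ≤ θ * f (x / 2) + (1 - θ) * f x := by
        simpa [Fin.sum_univ_two] using
          hf.apply_le_sum_of_lt hp0 (by simp [Fin.sum_univ_two]) ha
            (c := (θ * (x / 2) + (1 - θ) * x + x) / 2) (by simp [Fin.sum_univ_two]; linarith)
      _ = f x + θ * (f (x / 2) - f x) := by ring
  have hlim : Tendsto (fun θ : ℝ => f x + θ * (f (x / 2) - f x)) (𝓝[>] 0) (𝓝 (f x)) := by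
    have h0 := (show Continuous fun θ : ℝ => f x + θ * (f (x / 2) - f x) by fun_prop).tendsto 0
    simpa using h0.mono_left nhdsWithin_le_nhds
  exact ge_of_tendsto hlim (eventually_of_mem (Ioo_mem_nhdsGT one_pos) hchord)

theorem sum_le_apply_inv_sum_div (hf : OperatorAntitone f) (hp0 : ∀ t, 0 ≤ p t)
    (hp1 : ∑ t, p t = 1) (ha : ∀ t, 0 < a t) :
    ∑ t, p t * f (a t) ≤ f (∑ t, p t / a t)⁻¹ := by
  have hα : 0 < ∑ t, p t / a t := by
    obtain ⟨t, -, ht⟩ := Finset.exists_ne_zero_of_sum_ne_zero (hp1.trans_ne one_ne_zero)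
    exact Finset.sum_pos' (fun t _ => div_nonneg (hp0 t) (ha t).le)
      ⟨t, Finset.mem_univ t, div_pos ((hp0 t).lt_of_ne' ht) (ha t)⟩
  refine hf.le_apply_of_forall_lt (inv_pos.mpr hα) fun y hy0 hy => ?_
  have hyα := mul_lt_mul_of_pos_right hy hα
  rw [inv_mul_cancel₀ hα.ne'] at hyα
  exact hf.sum_le_apply_of_mul_lt_one hp0 hp1 ha hy0 hyα

end OperatorAntitone

lemma sum_norm_sq_eq_one_of_orthonormal {n : Type} [Fintype n] [DecidableEq n]
    {φ : n → n → ℂ} (hφ : ∀ s t, star (φ s) ⬝ᵥ φ t = if s = t then 1 else 0) (z : n) :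
    ∑ t, ‖φ t z‖ ^ 2 = 1 := by
  set U : Matrix n n ℂ := Matrix.of fun i t => φ t i
  have hU : star U * U = 1 := by
    ext s t
    simpa [Matrix.mul_apply, dotProduct, one_apply, U] using hφ s t
  have h : (U * star U) z z = 1 := by rw [mul_eq_one_comm.mp hU, one_apply_eq]
  rw [mul_apply] at h
  have hc : ((∑ t, ‖φ t z‖ ^ 2 : ℝ) : ℂ) = 1 := by
    rw [← h]
    push_cast
    simp [U, Complex.mul_conj']
  exact_mod_cast hc

theorem stmt_18_general (d : ℕ) (f : ℝ → ℝ)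
    (hf : ∀ (n : Type) [Fintype n] [DecidableEq n] (A B : Matrix n n ℂ),
      A.PosDef → B.PosDef → (B - A).PosSemidef → (matFun f A - matFun f B).PosSemidef)
    (lam mu nu : Fin d → ℝ) (hlam : ∀ z, 0 ≤ lam z) (hmu : ∀ z, 0 < mu z)
    (hnu : ∀ t, 0 < nu t)
    (φ : Fin d → (Fin d → ℂ))
    (hφ : ∀ s t, star (φ s) ⬝ᵥ φ t = if s = t then 1 else 0) :
    ∑ z, ∑ t, f (mu z / nu t) * (lam z * ‖φ t z‖ ^ 2) ≤
      ∑ z, lam z * f (mu z / (∑ t, nu t * ‖φ t z‖ ^ 2)) := by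
  have hrow : ∀ z, ∑ t, ‖φ t z‖ ^ 2 * f (mu z / nu t)
      ≤ f (mu z / ∑ t, nu t * ‖φ t z‖ ^ 2) := by
    intro z
    have h := OperatorAntitone.sum_le_apply_inv_sum_div hf (fun t => sq_nonneg ‖φ t z‖)
      (sum_norm_sq_eq_one_of_orthonormal hφ z) (fun t => div_pos (hmu z) (hnu t))
    have hτ : ∑ t, ‖φ t z‖ ^ 2 / (mu z / nu t) = (∑ t, nu t * ‖φ t z‖ ^ 2) / mu z := by
      rw [Finset.sum_div]
      exact Finset.sum_congr rfl fun t _ => by field_simp [(hmu z).ne', (hnu t).ne']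
    rwa [hτ, inv_div] at h
  calc ∑ z, ∑ t, f (mu z / nu t) * (lam z * ‖φ t z‖ ^ 2)
      = ∑ z, lam z * ∑ t, ‖φ t z‖ ^ 2 * f (mu z / nu t) := Finset.sum_congr rfl fun z _ => by
        rw [Finset.mul_sum]
        exact Finset.sum_congr rfl fun t _ => by ring
    _ ≤ ∑ z, lam z * f (mu z / (∑ t, nu t * ‖φ t z‖ ^ 2)) :=
        Finset.sum_le_sum fun z _ => mul_le_mul_of_nonneg_left (hrow z) (hlam z)

/-- Classical case: for commuting `X = ∑ λ_z |z⟩⟨z|`, `Y = ∑ μ_z |z⟩⟨z|` (standard basis),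
`f` operator anti-monotone on `(0,∞)`, and a positive definite density operator
`τ = ∑ ν_t |φ_t⟩⟨φ_t|`, one has
`∑_{z,t} f(μ_z/ν_t) λ_z |⟨z|φ_t⟩|² ≤ ∑_z λ_z f(μ_z/τ_z)` with `τ_z = ⟨z|τ|z⟩`. -/
theorem stmt_18 (d : ℕ) (f : ℝ → ℝ)
    (hf : ∀ (n : Type) [Fintype n] [DecidableEq n] (A B : Matrix n n ℂ),
      A.PosDef → B.PosDef → (B - A).PosSemidef → (matFun f A - matFun f B).PosSemidef)
    (lam mu nu : Fin d → ℝ) (hlam : ∀ z, 0 ≤ lam z) (hmu : ∀ z, 0 < mu z)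
    (hnu : ∀ t, 0 < nu t) (hnu1 : ∑ t, nu t = 1)
    (φ : Fin d → (Fin d → ℂ))
    (hφ : ∀ s t, star (φ s) ⬝ᵥ φ t = if s = t then 1 else 0) :
    ∑ z, ∑ t, f (mu z / nu t) * (lam z * ‖φ t z‖ ^ 2) ≤
      ∑ z, lam z * f (mu z / (∑ t, nu t * ‖φ t z‖ ^ 2)) :=
  stmt_18_general d f hf lam mu nu hlam hmu hnu φ hφ
end
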